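/- (Proposition 2, Reformulation of the finite-buffer hypercube model.) Fix a buffer capacity C ≥ 1. Let (p_n)_{n=0}^{N} be a solution of the conditional probability formulation with p_n(m) ≥ 0 for all n and m ∈ C_n, and suppose λ(n) > 0 for 0 ≤ n ≤ N−1 and μ(n) > 0 for 1 ≤ n ≤ N; extend λ(n) := λ for N ≤ n ≤ N+C−1. Define G(n) = ∏_{s=1}^{n} λ(s−1)/μ(s) for 1 ≤ n ≤ N, G(n) = (∏_{s=0}^{n−1} λ(s))/(μ(1)⋯μ(N−1)·μ(N)^{n−N+1}) for N+1 ≤ n ≤ N+C, and p(0) = (1 + Σ_{n=1}^{N+C} G(n))^{−1}, p(n) = G(n)·p(0). Then P(m) := p(w(m))·p_{w(m)}(m) and P̃(c) := p(N+c), c = 1,…,C, satisfy the finite-buffer balance equations, including the normalization Σ_m P(m) + Σ_{c=1}^{C} P̃(c) = 1. -/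

import Mathlib

/-!
A state other than the full one sends every arriving call to some free unit, so its total
arrival rate is `λ ∑ⱼ fⱼ = λ`; hence `λ(n) = λ` for `n < N`, and
`G(n) = λⁿ / (μ(1) ⋯ μ(min n N) · μ(N) ^ (n - N))` are the coefficients of the birth–death
chain on `0, …, N + C` with birth rate `λ` and death rate `μ(min n N)`:
`G(n + 1) μ(min (n + 1) N) = G(n) λ`. Multiplying the conditional equation at level `n` by `G(n)`
turns its coefficients `μ(n) / λ(n - 1)` and `λ(n) / μ(n + 1)` into `G(n - 1) / G(n)` and
`G(n + 1) / G(n)`, which gives the balance equation at a state of that level. At the full state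
and in the queue the balance equations are this recursion itself, and the normalization holds
because each `p_n` sums to one over its layer.
-/

open Finset Filter

/-- Number of busy units in state `B`. -/
def wt {N : ℕ} (B : Fin N → Bool) : ℕ := (Finset.univ.filter fun i => B i = true).card

/-- The layer `C_n`: states with exactly `n` busy units. -/
def layer (N n : ℕ) : Finset (Fin N → Bool) := Finset.univ.filter fun B => wt B = n

/-- The full state: all units busy. -/
def fullState (N : ℕ) : Fin N → Bool := fun _ => true

/-- Unit `i` is the most preferred free unit at node `j` in state `l`
(ranks are given by the permutation `ζ j`). -/
def dispatched {N J : ℕ} (ζ : Fin J → (Fin N ≃ Fin N)) (l : Fin N → Bool) (j : Fin J)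
    (i : Fin N) : Prop :=
  l i = false ∧ ∀ h : Fin N, (h : ℕ) < ((ζ j).symm i : ℕ) → l ((ζ j) h) = true

instance {N J : ℕ} (ζ : Fin J → (Fin N ≃ Fin N)) (l : Fin N → Bool) (j : Fin J) (i : Fin N) :
    Decidable (dispatched ζ l j i) := by
  unfold dispatched; infer_instance

/-- Upward transition rate `λ_{lm}`: nonzero only if `m` arises from `l` by flipping
one coordinate `i` from free to busy, in which case it is `λ` times the total demand
fraction of the nodes dispatching unit `i` in state `l`. -/
noncomputable def upRate {N J : ℕ} (lam : ℝ) (f : Fin J → ℝ) (ζ : Fin J → (Fin N ≃ Fin N))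
    (l m : Fin N → Bool) : ℝ :=
  ∑ i : Fin N,
    if l i = false ∧ m = Function.update l i true then
      lam * ∑ j : Fin J, if dispatched ζ l j i then f j else 0
    else 0

/-- Downward transition rate `μ_{lm}`: nonzero only if `m` arises from `l` by flipping
one coordinate `i` from busy to free, in which case it is `ν i`. -/
noncomputable def downRate {N : ℕ} (ν : Fin N → ℝ) (l m : Fin N → Bool) : ℝ :=
  ∑ i : Fin N, if l i = true ∧ m = Function.update l i false then ν i else 0

/-- Total upward rate `λ_m = Σ_l λ_{ml}` out of state `m`. -/
noncomputable def totalUp {N J : ℕ} (lam : ℝ) (f : Fin J → ℝ) (ζ : Fin J → (Fin N ≃ Fin N))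
    (m : Fin N → Bool) : ℝ :=
  ∑ l : Fin N → Bool, upRate lam f ζ m l

/-- Total service completion rate `μ_m = Σ_{i busy} ν i` out of state `m`. -/
noncomputable def totalDown {N : ℕ} (ν : Fin N → ℝ) (m : Fin N → Bool) : ℝ :=
  ∑ i : Fin N, if m i = true then ν i else 0

/-- `C^m_n`: the states of layer `n` at Hamming distance 1 from `m`. -/
def adjLayer {N : ℕ} (n : ℕ) (m : Fin N → Bool) : Finset (Fin N → Bool) :=
  (layer N n).filter fun l => (Finset.univ.filter fun i => l i ≠ m i).card = 1

/-- `λ(n) = Σ_{m ∈ C_n} p_n(m) · λ_m`. -/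
noncomputable def layerLamOf {N J : ℕ} (lam : ℝ) (f : Fin J → ℝ) (ζ : Fin J → (Fin N ≃ Fin N))
    (p : ℕ → (Fin N → Bool) → ℝ) (n : ℕ) : ℝ :=
  ∑ m ∈ layer N n, p n m * totalUp lam f ζ m

/-- `μ(n) = Σ_{m ∈ C_n} p_n(m) · μ_m`. -/
noncomputable def layerMuOf {N : ℕ} (ν : Fin N → ℝ) (p : ℕ → (Fin N → Bool) → ℝ) (n : ℕ) : ℝ :=
  ∑ m ∈ layer N n, p n m * totalDown ν m

/-- The conditional probability formulation of the hypercube model. -/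
def IsCondSolution {N J : ℕ} (lam : ℝ) (f : Fin J → ℝ) (ζ : Fin J → (Fin N ≃ Fin N))
    (ν : Fin N → ℝ) (p : ℕ → (Fin N → Bool) → ℝ) : Prop :=
  (∀ m ∈ layer N 0, p 0 m = 1) ∧
  (∀ m ∈ layer N N, p N m = 1) ∧
  (∀ n, 1 ≤ n → n ≤ N - 1 → ∀ m ∈ layer N n,
    p n m =
      (∑ l ∈ layer N (n - 1),
        p (n - 1) l * (layerMuOf ν p n / layerLamOf lam f ζ p (n - 1)) *
          (upRate lam f ζ l m / (totalUp lam f ζ m + totalDown ν m))) +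
      (∑ l ∈ adjLayer (n + 1) m,
        p (n + 1) l * (layerLamOf lam f ζ p n / layerMuOf ν p (n + 1)) *
          (downRate ν l m / (totalUp lam f ζ m + totalDown ν m)))) ∧
  (∀ n ≤ N, ∑ m ∈ layer N n, p n m = 1)

/-- The extended arrival rates: `λ(n)` as in the conditional formulation for `n ≤ N-1`,
and `λ(n) = λ` for `n ≥ N`. -/
noncomputable def lamExt {N J : ℕ} (lam : ℝ) (f : Fin J → ℝ) (ζ : Fin J → (Fin N ≃ Fin N))
    (p : ℕ → (Fin N → Bool) → ℝ) (n : ℕ) : ℝ :=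
  if n ≤ N - 1 then layerLamOf lam f ζ p n else lam

/-- The birth-death coefficients `G(n)` of the finite-buffer system. -/
noncomputable def Gfb {N J : ℕ} (lam : ℝ) (f : Fin J → ℝ) (ζ : Fin J → (Fin N ≃ Fin N))
    (ν : Fin N → ℝ) (p : ℕ → (Fin N → Bool) → ℝ) (n : ℕ) : ℝ :=
  if n ≤ N then ∏ s ∈ Finset.Icc 1 n, lamExt lam f ζ p (s - 1) / layerMuOf ν p s
  else (∏ s ∈ Finset.range n, lamExt lam f ζ p s) /
    ((∏ s ∈ Finset.Icc 1 (N - 1), layerMuOf ν p s) * layerMuOf ν p N ^ (n - N + 1))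

/-- The finite-buffer balance equations (buffer capacity `C ≥ 1`), with normalization.
`Pq c` is the probability `P̃(c)` of `c` waiting calls; the convention `P̃(0) = P(full)`
is used in the queue recursions. -/
def SatisfiesFBBalance {N J : ℕ} (lam : ℝ) (f : Fin J → ℝ) (ζ : Fin J → (Fin N ≃ Fin N))
    (ν : Fin N → ℝ) (C : ℕ) (P : (Fin N → Bool) → ℝ) (Pq : ℕ → ℝ) : Prop :=
  (∀ m : Fin N → Bool, m ≠ fullState N →
    P m * (totalUp lam f ζ m + totalDown ν m) =
      (∑ l : Fin N → Bool, P l * upRate lam f ζ l m) +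
      (∑ l : Fin N → Bool, P l * downRate ν l m)) ∧
  (P (fullState N) * (lam + ∑ i, ν i) =
      (∑ l ∈ layer N (N - 1), P l * lam) + Pq 1 * ∑ i, ν i) ∧
  (∀ c, 1 ≤ c → c ≤ C - 1 →
      Pq c * (lam + ∑ i, ν i) =
        (if c = 1 then P (fullState N) else Pq (c - 1)) * lam + Pq (c + 1) * ∑ i, ν i) ∧
  (Pq C * (∑ i, ν i) = (if C = 1 then P (fullState N) else Pq (C - 1)) * lam) ∧
  ((∑ m : Fin N → Bool, P m) + (∑ c ∈ Finset.Icc 1 C, Pq c) = 1)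

section Sums

variable {M : Type*} [AddCommMonoid M]

lemma sum_range_succ_eq_add_sum_Icc (g : ℕ → M) (K : ℕ) :
    ∑ n ∈ range (K + 1), g n = g 0 + ∑ n ∈ Icc 1 K, g n := by
  induction K with
  | zero => simp
  | succ K ih => rw [sum_range_succ, ih, sum_Icc_succ_top (by omega), add_assoc]

lemma sum_range_add_sum_Icc_add (g : ℕ → M) (N C : ℕ) :
    ∑ n ∈ range (N + 1), g n + ∑ k ∈ Icc 1 C, g (N + k) = ∑ n ∈ range (N + C + 1), g n := by
  induction C with
  | zero => simp
  | succ C ih =>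
    rw [sum_Icc_succ_top (by omega), ← add_assoc, ih, ← add_assoc N C 1,
      sum_range_succ _ (N + C + 1)]

end Sums

section States

variable {N : ℕ}

lemma mem_layer {n : ℕ} {B : Fin N → Bool} : B ∈ layer N n ↔ wt B = n := by
  simp [layer]

lemma wt_le (B : Fin N → Bool) : wt B ≤ N := by
  simpa [wt] using card_filter_le univ fun i => B i = true

lemma wt_eq_iff_eq_fullState {B : Fin N → Bool} : wt B = N ↔ B = fullState N := by
  have := card_filter_eq_iff (s := (univ : Finset (Fin N))) (p := fun i => B i = true)
  simp_all [wt, fullState, funext_iff]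

lemma wt_eq_zero_iff {B : Fin N → Bool} : wt B = 0 ↔ B = fun _ => false := by
  simp [wt, funext_iff]

lemma layer_self : layer N N = {fullState N} := by
  ext B
  simp [mem_layer, wt_eq_iff_eq_fullState]

lemma wt_update_true {l : Fin N → Bool} {i : Fin N} (h : l i = false) :
    wt (Function.update l i true) = wt l + 1 := by
  have hset : (univ.filter fun k => Function.update l i true k = true)
      = insert i (univ.filter fun k => l k = true) := by
    ext k
    by_cases hk : k = i <;> simp [Function.update_apply, hk]
  simp [wt, hset, card_insert_of_notMem, h]

end States

section Dispatch

variable {N J : ℕ} (ζ : Fin J → (Fin N ≃ Fin N))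

lemma dispatched_unique {l : Fin N → Bool} {j : Fin J} {i i' : Fin N}
    (hi : dispatched ζ l j i) (hi' : dispatched ζ l j i') : i = i' := by
  rcases lt_trichotomy ((ζ j).symm i : ℕ) ((ζ j).symm i') with hlt | heq | hgt
  · simpa [hi.1] using hi'.2 _ hlt
  · exact (ζ j).symm.injective (Fin.ext heq)
  · simpa [hi'.1] using hi.2 _ hgt

lemma exists_dispatched {l : Fin N → Bool} (hl : l ≠ fullState N) (j : Fin J) :
    ∃ i, dispatched ζ l j i := by
  obtain ⟨i, hi⟩ : ∃ i, l i = false := by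
    by_contra! h
    exact hl (funext fun i => by simpa [fullState] using h i)
  obtain ⟨r, hr, hmin⟩ := wellFounded_lt.has_min {r : Fin N | l (ζ j r) = false}
    ⟨(ζ j).symm i, by simpa using hi⟩
  refine ⟨ζ j r, hr, fun h hlt => ?_⟩
  by_contra hh
  exact hmin h (by simpa using hh) (by simpa using hlt)

lemma totalUp_eq_mul_sum {lam : ℝ} {f : Fin J → ℝ} {m : Fin N → Bool}
    (hm : m ≠ fullState N) : totalUp lam f ζ m = lam * ∑ j, f j := by
  have hunit : ∀ i, (∑ l : Fin N → Bool, if m i = false ∧ l = Function.update m i true then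
      lam * ∑ j, (if dispatched ζ m j i then f j else 0) else 0)
      = lam * ∑ j, if dispatched ζ m j i then f j else 0 := fun i => by
    by_cases hmi : m i = false
    · simp [hmi]
    · simp [hmi, sum_eq_zero fun j _ => if_neg fun hd : dispatched ζ m j i => hmi hd.1]
  have hnode : ∀ j, (∑ i, if dispatched ζ m j i then f j else 0) = f j := fun j => by
    obtain ⟨i₀, hi₀⟩ := exists_dispatched ζ hm j
    rw [sum_eq_single_of_mem i₀ (mem_univ _)
      fun i _ hi => if_neg fun hd => hi (dispatched_unique ζ hd hi₀), if_pos hi₀]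
  simp only [totalUp, upRate]
  rw [sum_comm]
  simp only [hunit]
  rw [← mul_sum, sum_comm, sum_congr rfl fun j _ => hnode j]

lemma totalUp_eq {lam : ℝ} {f : Fin J → ℝ} (hf : ∑ j, f j = 1) {m : Fin N → Bool}
    (hm : m ≠ fullState N) : totalUp lam f ζ m = lam := by
  rw [totalUp_eq_mul_sum ζ hm, hf, mul_one]

end Dispatch

section Rates

variable {N J : ℕ}

lemma totalDown_fullState (ν : Fin N → ℝ) : totalDown ν (fullState N) = ∑ i, ν i := by
  simp [totalDown, fullState]

lemma totalDown_nonneg {ν : Fin N → ℝ} (hν : ∀ i, 0 ≤ ν i) (m : Fin N → Bool) :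
    0 ≤ totalDown ν m :=
  sum_nonneg fun i _ => by split_ifs <;> simp [hν i]

lemma upRate_eq_zero {lam : ℝ} {f : Fin J → ℝ} {ζ : Fin J → (Fin N ≃ Fin N)}
    {l m : Fin N → Bool} (h : wt l + 1 ≠ wt m) : upRate lam f ζ l m = 0 :=
  sum_eq_zero fun _ _ => if_neg fun ⟨hi, hm⟩ => h (hm ▸ wt_update_true hi).symm

lemma mem_adjLayer_of_downRate_ne_zero {ν : Fin N → ℝ} {l m : Fin N → Bool}
    (h : downRate ν l m ≠ 0) : l ∈ adjLayer (wt m + 1) m := by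
  obtain ⟨i, -, hi⟩ := exists_ne_zero_of_sum_ne_zero h
  obtain ⟨hli, rfl⟩ : l i = true ∧ m = Function.update l i false := by
    by_contra hc
    exact hi (if_neg hc)
  have hwt : wt l = wt (Function.update l i false) + 1 := by
    have hrestore : Function.update (Function.update l i false) i true = l := by
      rw [Function.update_idem, ← hli, Function.update_eq_self]
    conv_lhs => rw [← hrestore]
    exact wt_update_true (Function.update_self i false l)
  have hdiff : (univ.filter fun k => l k ≠ Function.update l i false k) = {i} := by
    ext k
    by_cases hk : k = i <;> simp [Function.update_apply, hk, hli]
  simp [adjLayer, mem_layer, hwt, hdiff]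

lemma sum_mul_upRate_eq (P : (Fin N → Bool) → ℝ) (lam : ℝ) (f : Fin J → ℝ)
    (ζ : Fin J → (Fin N ≃ Fin N)) (m : Fin N → Bool) :
    ∑ l, P l * upRate lam f ζ l m = ∑ l ∈ layer N (wt m - 1), P l * upRate lam f ζ l m := by
  refine (sum_subset (subset_univ _) fun l _ hl => ?_).symm
  rw [upRate_eq_zero fun h => hl (mem_layer.mpr (by omega)), mul_zero]

lemma sum_mul_downRate_eq (P : (Fin N → Bool) → ℝ) (ν : Fin N → ℝ) (m : Fin N → Bool) :
    ∑ l, P l * downRate ν l m = ∑ l ∈ adjLayer (wt m + 1) m, P l * downRate ν l m := by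
  refine (sum_subset (subset_univ _) fun l _ hl => ?_).symm
  rw [not_imp_comm.mp mem_adjLayer_of_downRate_ne_zero hl, mul_zero]

lemma downRate_to_empty (ν : Fin N → ℝ) {l : Fin N → Bool} (hl : wt l = 1) :
    downRate ν l (fun _ => false) = totalDown ν l := by
  obtain ⟨a, ha⟩ := card_eq_one.mp hl
  have hbusy : ∀ k, l k = true ↔ k = a := fun k => by
    simpa using congrArg (k ∈ ·) ha
  refine sum_congr rfl fun i _ => if_congr ⟨And.left, fun hi => ⟨hi, ?_⟩⟩ rfl rfl
  funext k
  by_cases hk : k = i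
  · simp [hk]
  · have : l k ≠ true := fun h => hk (((hbusy k).mp h).trans ((hbusy i).mp hi).symm)
    simpa [Function.update_apply, hk] using this

lemma adjLayer_subset {n : ℕ} {m : Fin N → Bool} : adjLayer n m ⊆ layer N n :=
  filter_subset _ _

lemma adjLayer_one_empty : adjLayer 1 (fun _ => false : Fin N → Bool) = layer N 1 := by
  ext l
  simp [adjLayer, mem_layer, wt]

end Rates

section BirthDeath

/-- The product of the first `n` death rates of a birth–death chain whose death rate at
level `n` is `μ (min n N)`. -/
def serviceProd (μ : ℕ → ℝ) (N n : ℕ) : ℝ :=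
  (∏ s ∈ Icc 1 (min n N), μ s) * μ N ^ (n - N)

lemma serviceProd_succ (μ : ℕ → ℝ) (N n : ℕ) :
    serviceProd μ N (n + 1) = serviceProd μ N n * μ (min (n + 1) N) := by
  unfold serviceProd
  rcases lt_or_ge n N with hn | hn
  · rw [min_eq_left hn.le, min_eq_left hn, prod_Icc_succ_top (by omega),
      Nat.sub_eq_zero_of_le hn.le, Nat.sub_eq_zero_of_le hn]
    ring
  · rw [min_eq_right hn, min_eq_right (by omega), Nat.sub_add_comm hn, pow_succ]
    ring

lemma serviceProd_pos {μ : ℕ → ℝ} {N : ℕ} (hN : 1 ≤ N) (hμ : ∀ s, 1 ≤ s → s ≤ N → 0 < μ s)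
    (n : ℕ) : 0 < serviceProd μ N n :=
  mul_pos (prod_pos fun s hs => hμ s (mem_Icc.mp hs).1 ((mem_Icc.mp hs).2.trans (min_le_right _ _)))
    (pow_pos (hμ N hN le_rfl) _)

variable {N J : ℕ} {lam : ℝ} {f : Fin J → ℝ} {ζ : Fin J → (Fin N ≃ Fin N)} {ν : Fin N → ℝ}
  {p : ℕ → (Fin N → Bool) → ℝ}

lemma layerLamOf_eq (hf : ∑ j, f j = 1) {n : ℕ} (hn : n < N)
    (hnorm : ∑ m ∈ layer N n, p n m = 1) : layerLamOf lam f ζ p n = lam := by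
  have hup : ∀ m ∈ layer N n, p n m * totalUp lam f ζ m = p n m * lam := fun m hm => by
    have hm' : m ≠ fullState N := fun h => by
      rw [mem_layer, h, wt_eq_iff_eq_fullState.mpr rfl] at hm
      omega
    rw [totalUp_eq ζ hf hm']
  rw [layerLamOf, sum_congr rfl hup, ← sum_mul, hnorm, one_mul]

lemma lamExt_eq (hN : 1 ≤ N) (hf : ∑ j, f j = 1)
    (hnorm : ∀ n ≤ N, ∑ m ∈ layer N n, p n m = 1) (n : ℕ) :
    lamExt lam f ζ p n = lam := by
  unfold lamExt
  split_ifs with hn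
  · exact layerLamOf_eq hf (by omega) (hnorm n (by omega))
  · rfl

lemma layerMuOf_self (hpN : p N (fullState N) = 1) : layerMuOf ν p N = ∑ i, ν i := by
  rw [layerMuOf, layer_self, sum_singleton, hpN, one_mul, totalDown_fullState]

lemma Gfb_zero : Gfb lam f ζ ν p 0 = 1 := by
  simp [Gfb]

lemma Gfb_eq_pow_div (hN : 1 ≤ N) (hlamExt : ∀ n, lamExt lam f ζ p n = lam) (n : ℕ) :
    Gfb lam f ζ ν p n = lam ^ n / serviceProd (layerMuOf ν p) N n := by
  unfold Gfb serviceProd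
  split_ifs with hn
  · rw [min_eq_left hn, Nat.sub_eq_zero_of_le hn, pow_zero, mul_one, prod_div_distrib]
    simp [hlamExt]
  · obtain ⟨k, rfl⟩ : ∃ k, N = k + 1 := ⟨N - 1, by omega⟩
    rw [min_eq_right (by omega), prod_Icc_succ_top (by omega), Nat.add_sub_cancel, pow_succ]
    simp only [hlamExt, prod_const, card_range]
    ring

lemma Gfb_pos (hN : 1 ≤ N) (hlam : 0 < lam) (hlamExt : ∀ n, lamExt lam f ζ p n = lam)
    (hmu : ∀ n, 1 ≤ n → n ≤ N → 0 < layerMuOf ν p n) (n : ℕ) : 0 < Gfb lam f ζ ν p n := by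
  rw [Gfb_eq_pow_div hN hlamExt]
  exact div_pos (pow_pos hlam n) (serviceProd_pos hN hmu n)

lemma Gfb_succ_mul (hN : 1 ≤ N) (hlamExt : ∀ n, lamExt lam f ζ p n = lam)
    (hmu : ∀ n, 1 ≤ n → n ≤ N → 0 < layerMuOf ν p n) (n : ℕ) :
    Gfb lam f ζ ν p (n + 1) * layerMuOf ν p (min (n + 1) N) = Gfb lam f ζ ν p n * lam := by
  have hμ : layerMuOf ν p (min (n + 1) N) ≠ 0 := (hmu _ (by omega) (min_le_right _ _)).ne'
  rw [Gfb_eq_pow_div hN hlamExt, Gfb_eq_pow_div hN hlamExt, serviceProd_succ, pow_succ,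
    div_mul_eq_div_div, div_mul_cancel₀ _ hμ, div_mul_eq_mul_div]

end BirthDeath

section Balance

variable {N J : ℕ} {lam : ℝ} {f : Fin J → ℝ} {ζ : Fin J → (Fin N ≃ Fin N)} {ν : Fin N → ℝ}
  {p : ℕ → (Fin N → Bool) → ℝ} {c : ℕ → ℝ} {P : (Fin N → Bool) → ℝ}

lemma sum_mul_eq_of_subset_layer (hP : ∀ m, P m = c (wt m) * p (wt m) m) {n : ℕ}
    {s : Finset (Fin N → Bool)} (hs : s ⊆ layer N n) (g : (Fin N → Bool) → ℝ) :
    ∑ l ∈ s, P l * g l = c n * ∑ l ∈ s, p n l * g l := by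
  rw [mul_sum]
  refine sum_congr rfl fun l hl => ?_
  rw [hP, mem_layer.mp (hs hl), mul_assoc]

lemma sum_layer_eq (hnorm : ∀ n ≤ N, ∑ m ∈ layer N n, p n m = 1)
    (hP : ∀ m, P m = c (wt m) * p (wt m) m) {n : ℕ} (hn : n ≤ N) : ∑ l ∈ layer N n, P l = c n := by
  simpa [hnorm n hn] using sum_mul_eq_of_subset_layer hP (subset_refl (layer N n)) fun _ => 1

lemma sum_eq_sum_range_of_normalized (hnorm : ∀ n ≤ N, ∑ m ∈ layer N n, p n m = 1)
    (hP : ∀ m, P m = c (wt m) * p (wt m) m) : ∑ m, P m = ∑ n ∈ range (N + 1), c n := by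
  rw [← sum_fiberwise_of_maps_to (g := wt) fun m _ => mem_range.mpr (Nat.lt_succ_of_le (wt_le m))]
  exact sum_congr rfl fun n hn => sum_layer_eq hnorm hP (Nat.le_of_lt_succ (mem_range.mp hn))

lemma balance_of_wt_eq_zero (hf : ∑ j, f j = 1) (hsol : IsCondSolution lam f ζ ν p)
    (hc : ∀ n, c (n + 1) * layerMuOf ν p (min (n + 1) N) = c n * lam)
    (hP : ∀ m, P m = c (wt m) * p (wt m) m) {m : Fin N → Bool} (hm0 : wt m = 0)
    (hmN : m ≠ fullState N) :
    P m * (totalUp lam f ζ m + totalDown ν m) =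
      ∑ l, P l * upRate lam f ζ l m + ∑ l, P l * downRate ν l m := by
  have hN : 1 ≤ N := Nat.pos_of_ne_zero fun h => hmN (wt_eq_iff_eq_fullState.mp (by omega))
  have hup : ∀ l, upRate lam f ζ l m = 0 := fun l => upRate_eq_zero (by omega)
  have hdown : ∑ l, P l * downRate ν l m = c 1 * layerMuOf ν p 1 := by
    rw [sum_mul_downRate_eq, hm0, wt_eq_zero_iff.mp hm0, adjLayer_one_empty,
      sum_mul_eq_of_subset_layer hP (subset_refl _), layerMuOf]
    congr 1
    exact sum_congr rfl fun l hl => by rw [downRate_to_empty ν (mem_layer.mp hl)]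
  have hTD : totalDown ν m = 0 := by simp [totalDown, wt_eq_zero_iff.mp hm0]
  have hc0 := hc 0
  rw [min_eq_left hN] at hc0
  simp only [hup, mul_zero, sum_const_zero, zero_add, hdown, hP m, hm0,
    hsol.1 m (mem_layer.mpr hm0), totalUp_eq ζ hf hmN, hTD]
  linear_combination -hc0

lemma balance_of_wt_ne_zero (hf : ∑ j, f j = 1) (hν : ∀ i, 0 ≤ ν i) (hlam : 0 < lam)
    (hsol : IsCondSolution lam f ζ ν p) (hmu : ∀ n, 1 ≤ n → n ≤ N → 0 < layerMuOf ν p n)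
    (hc : ∀ n, c (n + 1) * layerMuOf ν p (min (n + 1) N) = c n * lam)
    (hP : ∀ m, P m = c (wt m) * p (wt m) m) {m : Fin N → Bool} (hm0 : wt m ≠ 0)
    (hmN : m ≠ fullState N) :
    P m * (totalUp lam f ζ m + totalDown ν m) =
      ∑ l, P l * upRate lam f ζ l m + ∑ l, P l * downRate ν l m := by
  obtain ⟨-, -, hcond, hnorm⟩ := hsol
  obtain ⟨k, hk⟩ : ∃ k, wt m = k + 1 := ⟨wt m - 1, by omega⟩
  have hkN : k + 2 ≤ N := by
    have := wt_le m
    have := mt wt_eq_iff_eq_fullState.mp hmN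
    omega
  have hA : totalUp lam f ζ m + totalDown ν m ≠ 0 := by
    rw [totalUp_eq ζ hf hmN]
    exact (add_pos_of_pos_of_nonneg hlam (totalDown_nonneg hν m)).ne'
  have hμ : layerMuOf ν p (k + 1 + 1) ≠ 0 := (hmu _ (by omega) hkN).ne'
  have hck := hc k
  have hck1 := hc (k + 1)
  rw [min_eq_left (by omega)] at hck hck1
  have hE := hcond (k + 1) (by omega) (by omega) m (mem_layer.mpr hk)
  rw [Nat.add_sub_cancel, layerLamOf_eq hf (by omega) (hnorm k (by omega)),
    layerLamOf_eq hf (by omega) (hnorm (k + 1) (by omega))] at hE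
  rw [sum_mul_upRate_eq, sum_mul_downRate_eq, hk, Nat.add_sub_cancel,
    sum_mul_eq_of_subset_layer hP (subset_refl _),
    sum_mul_eq_of_subset_layer hP adjLayer_subset, hP m, hk, hE]
  set A := totalUp lam f ζ m + totalDown ν m
  rw [mul_add (c (k + 1)), add_mul]
  congr 1
  · rw [mul_sum, sum_mul, mul_sum]
    refine sum_congr rfl fun l _ => ?_
    field_simp
    linear_combination (p k l * upRate lam f ζ l m) * hck
  · rw [mul_sum, sum_mul, mul_sum]
    refine sum_congr rfl fun l _ => ?_
    field_simp
    linear_combination -(p (k + 1 + 1) l * downRate ν l m) * hck1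

end Balance

theorem satisfiesFBBalance_of_birthDeath {N J : ℕ} {lam : ℝ} {f : Fin J → ℝ}
    {ζ : Fin J → (Fin N ≃ Fin N)} {ν : Fin N → ℝ} {p : ℕ → (Fin N → Bool) → ℝ} {c : ℕ → ℝ}
    {P : (Fin N → Bool) → ℝ} {C : ℕ} (hN : 1 ≤ N) (hC : 1 ≤ C) (hf : ∑ j, f j = 1)
    (hν : ∀ i, 0 ≤ ν i) (hlam : 0 < lam) (hsol : IsCondSolution lam f ζ ν p)
    (hmu : ∀ n, 1 ≤ n → n ≤ N → 0 < layerMuOf ν p n)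
    (hc : ∀ n, c (n + 1) * layerMuOf ν p (min (n + 1) N) = c n * lam)
    (hsum : ∑ n ∈ range (N + C + 1), c n = 1) (hP : ∀ m, P m = c (wt m) * p (wt m) m) :
    SatisfiesFBBalance lam f ζ ν C P fun k => c (N + k) := by
  have hpN : p N (fullState N) = 1 := hsol.2.1 _ (mem_layer.mpr (wt_eq_iff_eq_fullState.mpr rfl))
  have hfull : P (fullState N) = c N := by
    rw [hP, wt_eq_iff_eq_fullState.mpr rfl, hpN, mul_one]
  have hqueue : ∀ k, c (N + k + 1) * ∑ i, ν i = c (N + k) * lam := fun k => by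
    simpa [min_eq_right (by omega : N ≤ N + k + 1), layerMuOf_self hpN] using hc (N + k)
  have hprev : ∀ k, (if k + 1 = 1 then P (fullState N) else c (N + (k + 1 - 1))) = c (N + k) :=
    fun k => by split_ifs with hk <;> simp_all
  refine ⟨fun m hm => ?_, ?_, fun k hk1 hkC => ?_, ?_, ?_⟩
  · rcases eq_or_ne (wt m) 0 with h0 | h0
    exacts [balance_of_wt_eq_zero hf hsol hc hP h0 hm,
      balance_of_wt_ne_zero hf hν hlam hsol hmu hc hP h0 hm]
  · obtain ⟨n, rfl⟩ : ∃ n, N = n + 1 := ⟨N - 1, by omega⟩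
    have hcn := hc n
    rw [min_self, layerMuOf_self hpN] at hcn
    rw [hfull, Nat.add_sub_cancel, ← sum_mul, sum_layer_eq hsol.2.2.2 hP (by omega)]
    linear_combination hcn - hqueue 0
  · obtain ⟨k, rfl⟩ : ∃ k', k = k' + 1 := ⟨k - 1, by omega⟩
    simp only [hprev]
    linear_combination hqueue k - hqueue (k + 1)
  · obtain ⟨C, rfl⟩ : ∃ C', C = C' + 1 := ⟨C - 1, by omega⟩
    simp only [hprev]
    exact hqueue C
  · rw [sum_eq_sum_range_of_normalized hsol.2.2.2 hP, sum_range_add_sum_Icc_add, hsum]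

theorem hypercube_finite_buffer_reformulation_general
    {N J : ℕ} (hN : 2 ≤ N)
    (lam : ℝ) (hlam : 0 < lam)
    (f : Fin J → ℝ) (hfsum : ∑ j, f j = 1)
    (ν : Fin N → ℝ) (hν : ∀ i, 0 < ν i)
    (ζ : Fin J → (Fin N ≃ Fin N))
    (C : ℕ) (hC : 1 ≤ C)
    (p : ℕ → (Fin N → Bool) → ℝ)
    (hsol : IsCondSolution lam f ζ ν p)
    (hmuPos : ∀ n, 1 ≤ n → n ≤ N → 0 < layerMuOf ν p n) :
    SatisfiesFBBalance lam f ζ ν C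
      (fun m =>
        Gfb lam f ζ ν p (wt m) *
          (1 + ∑ n ∈ Finset.Icc 1 (N + C), Gfb lam f ζ ν p n)⁻¹ * p (wt m) m)
      (fun c =>
        Gfb lam f ζ ν p (N + c) *
          (1 + ∑ n ∈ Finset.Icc 1 (N + C), Gfb lam f ζ ν p n)⁻¹) := by
  have hN1 : 1 ≤ N := by omega
  have hlamExt : ∀ n, lamExt lam f ζ p n = lam := lamExt_eq hN1 hfsum hsol.2.2.2
  set S := 1 + ∑ n ∈ Icc 1 (N + C), Gfb lam f ζ ν p n
  have hS : 0 < S :=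
    add_pos_of_pos_of_nonneg one_pos
      (sum_nonneg fun n _ => (Gfb_pos hN1 hlam hlamExt hmuPos n).le)
  refine satisfiesFBBalance_of_birthDeath (c := fun n => Gfb lam f ζ ν p n * S⁻¹) hN1 hC hfsum
    (fun i => (hν i).le) hlam hsol hmuPos (fun n => ?_) ?_ fun m => rfl
  · rw [mul_right_comm, Gfb_succ_mul hN1 hlamExt hmuPos, mul_right_comm]
  · rw [← sum_mul, sum_range_succ_eq_add_sum_Icc, Gfb_zero, mul_inv_cancel₀ hS.ne']

/-- Proposition 2 (reformulation of the finite-buffer hypercube model). -/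
theorem hypercube_finite_buffer_reformulation
    {N J : ℕ} (hN : 2 ≤ N) (hJ : 1 ≤ J)
    (lam : ℝ) (hlam : 0 < lam)
    (f : Fin J → ℝ) (hf : ∀ j, 0 ≤ f j) (hfsum : ∑ j, f j = 1)
    (ν : Fin N → ℝ) (hν : ∀ i, 0 < ν i)
    (ζ : Fin J → (Fin N ≃ Fin N))
    (C : ℕ) (hC : 1 ≤ C)
    (p : ℕ → (Fin N → Bool) → ℝ)
    (hsol : IsCondSolution lam f ζ ν p)
    (hnonneg : ∀ n ≤ N, ∀ m ∈ layer N n, 0 ≤ p n m)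
    (hlamPos : ∀ n ≤ N - 1, 0 < layerLamOf lam f ζ p n)
    (hmuPos : ∀ n, 1 ≤ n → n ≤ N → 0 < layerMuOf ν p n) :
    SatisfiesFBBalance lam f ζ ν C
      (fun m =>
        Gfb lam f ζ ν p (wt m) *
          (1 + ∑ n ∈ Finset.Icc 1 (N + C), Gfb lam f ζ ν p n)⁻¹ * p (wt m) m)
      (fun c =>
        Gfb lam f ζ ν p (N + c) *
          (1 + ∑ n ∈ Finset.Icc 1 (N + C), Gfb lam f ζ ν p n)⁻¹) :=
  hypercube_finite_buffer_reformulation_general hN lam hlam f hfsum ν hν ζ C hC p hsol hmuPos
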